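/- arXiv:2112.11672 — 3 statements merged into one kernel-verified Lean document; each statement's English description precedes it below -/
import Mathlib

section
/- Let $a, b \in \mathbb{Q}$ and let $L = \sum_{j \geq 1} \ell_j t^j \in \mathbb{Q}[[t]]$ be a formal power series with zero constant term. Then the identity $\exp(-L) = \sum_{k=0}^{\infty} (-1)^k \big(\prod_{m=0}^{k-1}(a+mb)\big)\, t^k$ holds in $\mathbb{Q}[[t]]$ if and only if $\exp(L) = 1 + a\,t - b\,t^2\,L'(t)$ holds in $\mathbb{Q}[[t]]$, where $L'$ denotes the formal derivative of $L$ and the empty product (for $k=0$) equals $1$. (This is the paper's Definition-Lemma asserting the equivalence of its two definitions of the sequence $\ell^v_j$ for $v=(a,b)$.) -/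
/-!
Write `E = exp(L)`, `G = exp(-L)` and `S = 1 + a t - b t² L'`. Since `G' = -L' G`, the series
`G` satisfies `G + a t G + b t² G' = G S`. The operator `P ↦ P + a t P + b t² P'` is injective
(it acts on coefficients by `pₙ₊₁ ↦ pₙ₊₁ + (a + n b) pₙ`) and sends the series
`∑ (-1)ᵏ ∏_{m<k} (a + m b) tᵏ` to `1`, so that series equals `G` iff `G S = 1`, i.e. iff
`S = E`, because `E G = 1`.
-/

open PowerSeries

/-- Substitution of a formal power series `L` (with zero constant term) into the
exponential power series `exp(u) = ∑ uⁿ/n!`: the `n`-th coefficient of `exp(L)` is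
`∑_{k=0}^{n} (coefficient n of L^k) / k!` (terms with `k > n` vanish since `L` has
zero constant term). -/
noncomputable def expSubst (L : ℚ⟦X⟧) : ℚ⟦X⟧ :=
  PowerSeries.mk fun n => ∑ k ∈ Finset.range (n + 1), coeff n (L ^ k) / k.factorial

theorem PowerSeries.coeff_pow_eq_zero_of_lt {R : Type*} [CommSemiring R] {f : R⟦X⟧}
    (hf : constantCoeff f = 0) {n k : ℕ} (h : n < k) : coeff n (f ^ k) = 0 :=
  X_pow_dvd_iff.mp (pow_dvd_pow_of_dvd (X_dvd_iff.mpr hf) k) n h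

theorem expSubst_eq_subst_exp {L : ℚ⟦X⟧} (hL : constantCoeff L = 0) :
    expSubst L = (exp ℚ).subst L := by
  ext n
  rw [coeff_subst' (HasSubst.of_constantCoeff_zero' hL), expSubst, coeff_mk,
    finsum_eq_sum_of_support_subset (s := Finset.range (n + 1))]
  · simp [div_eq_inv_mul]
  · intro k hk
    by_contra hkn
    simp only [Finset.coe_range, Set.mem_Iio, not_lt] at hkn
    simp [coeff_pow_eq_zero_of_lt hL (Nat.lt_of_succ_le hkn)] at hk

theorem derivative_expSubst {L : ℚ⟦X⟧} (hL : constantCoeff L = 0) :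
    derivative ℚ (expSubst L) = expSubst L * derivative ℚ L := by
  rw [expSubst_eq_subst_exp hL, derivative_subst (HasSubst.of_constantCoeff_zero' hL),
    derivative_exp]

theorem constantCoeff_expSubst (L : ℚ⟦X⟧) : constantCoeff (expSubst L) = 1 := by
  rw [← coeff_zero_eq_constantCoeff_apply, expSubst, coeff_mk]
  simp

theorem expSubst_mul_expSubst_neg {L : ℚ⟦X⟧} (hL : constantCoeff L = 0) :
    expSubst L * expSubst (-L) = 1 := by
  have hL' : constantCoeff (-L) = 0 := by rw [map_neg, hL, neg_zero]
  refine derivative.ext ?_ (by simp [constantCoeff_expSubst])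
  rw [Derivation.leibniz, derivative_expSubst hL, derivative_expSubst hL', map_neg,
    Derivation.map_one_eq_zero, smul_eq_mul, smul_eq_mul]
  ring

section Pochhammer

variable {R : Type*} [CommRing R] (a b : R)

noncomputable def pochhammerOp (P : R⟦X⟧) : R⟦X⟧ :=
  P + C a * X * P + C b * X ^ 2 * derivative R P

theorem coeff_zero_pochhammerOp (P : R⟦X⟧) : coeff 0 (pochhammerOp a b P) = coeff 0 P := by
  simp [pochhammerOp, mul_comm _ X, pow_two, mul_assoc]

theorem coeff_succ_pochhammerOp (P : R⟦X⟧) (n : ℕ) :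
    coeff (n + 1) (pochhammerOp a b P) = coeff (n + 1) P + (a + n * b) * coeff n P := by
  rcases n with _ | n
  · simp [pochhammerOp, mul_comm _ X, pow_two, mul_assoc]
  · simp only [pochhammerOp, mul_comm _ X, mul_assoc, pow_two, map_add, coeff_succ_X_mul,
      coeff_C_mul, coeff_derivative, Nat.cast_add, Nat.cast_one]
    ring

theorem pochhammerOp_injective : Function.Injective (pochhammerOp a b) := by
  intro P Q h
  ext n
  induction n with
  | zero => simpa [coeff_zero_pochhammerOp] using congrArg (coeff 0) h
  | succ n ih => simpa [coeff_succ_pochhammerOp, ih] using congrArg (coeff (n + 1)) h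

theorem pochhammerOp_mk_pochhammer :
    pochhammerOp a b (mk fun k => (-1) ^ k * ∏ m ∈ Finset.range k, (a + m * b)) = 1 := by
  ext n
  rcases n with _ | n
  · simp [coeff_zero_pochhammerOp]
  · simp only [coeff_succ_pochhammerOp, coeff_mk, coeff_one, Finset.prod_range_succ, pow_succ,
      Nat.add_eq_zero_iff, one_ne_zero, and_false, if_false]
    ring

theorem pochhammerOp_eq_one_iff {P : R⟦X⟧} :
    pochhammerOp a b P = 1 ↔ P = mk fun k => (-1) ^ k * ∏ m ∈ Finset.range k, (a + m * b) := by
  rw [← pochhammerOp_mk_pochhammer a b]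
  exact (pochhammerOp_injective a b).eq_iff

end Pochhammer

theorem pochhammerOp_expSubst_neg (a b : ℚ) {L : ℚ⟦X⟧} (hL : constantCoeff L = 0) :
    pochhammerOp a b (expSubst (-L)) =
      expSubst (-L) * (1 + C a * X - C b * X ^ 2 * derivative ℚ L) := by
  rw [pochhammerOp, derivative_expSubst (by rw [map_neg, hL, neg_zero]), map_neg]
  ring

/-- For `a b : ℚ` and `L = ∑_{j≥1} ℓ_j t^j ∈ ℚ⟦t⟧` with zero constant
term, `exp(-L) = ∑ₖ (-1)^k (∏_{m=0}^{k-1}(a+mb)) t^k` holds iff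
`exp(L) = 1 + a t - b t² L'(t)` holds. -/
theorem stmt1 (a b : ℚ) (L : ℚ⟦X⟧) (hL : constantCoeff L = 0) :
    expSubst (-L) =
        (PowerSeries.mk fun k => (-1 : ℚ) ^ k * ∏ m ∈ Finset.range k, (a + (m : ℚ) * b)) ↔
      expSubst L = 1 + C a * X - C b * X ^ 2 * derivative ℚ L := by
  have hinv := expSubst_mul_expSubst_neg hL
  rw [← pochhammerOp_eq_one_iff, pochhammerOp_expSubst_neg a b hL]
  exact ⟨fun h => left_inv_eq_right_inv hinv h, fun h => by rwa [← h, mul_comm]⟩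
end

section
/- For every real $\epsilon > 0$ and every real $z$ with $|z| < \sqrt{2\epsilon}$, the series $\epsilon^{-1} \sum_{k=0}^{\infty} (-1)^k\, k!\, \epsilon^{-k}\, \frac{z^{2k+1}}{(2k+1)!!}$ converges and equals $\frac{2\, \operatorname{arsinh}(z/\sqrt{2\epsilon})}{\sqrt{z^2 + 2\epsilon}}$. (This is the paper's closed form for the $y$-function of the rescaled spectral curve associated with the class $\mathbb{J}$.) -/
open scoped Nat
open Filter Topology Finset Real

/-!
Put `x = z / √(2ε)`; after rescaling, the claim is that `arsinh x / √(1 + x²)` has the Taylor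
series `∑ aₖ x^{2k+1}` on `|x| < 1`, with `aₖ = (-1)ᵏ 2ᵏ k! / (2k+1)!!`. That function solves
`y f + (1 + y²) f' = 1`, and the recursion `(2k+3) aₖ₊₁ = -(2k+2) aₖ` makes the partial sum
`Sₙ` of degree `2n+1` solve it up to the single term `(2n+2) aₙ y^{2n+2}`. Hence
`√(1 + y²) Sₙ - arsinh` vanishes at `0` and has derivative at most `(2n+2) |x|^{2n+2}` on
`[-|x|, |x|]`, so by the mean value theorem it tends to `0` at `x` when `|x| < 1`.
-/

noncomputable def arsinhCoeff (k : ℕ) : ℝ :=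
  (-1) ^ k * 2 ^ k * k ! / (2 * k + 1)‼

lemma arsinhCoeff_succ (k : ℕ) :
    (2 * k + 3) * arsinhCoeff (k + 1) = -(2 * k + 2) * arsinhCoeff k := by
  have hdfac : (2 * (k + 1) + 1)‼ = (2 * k + 3) * (2 * k + 1)‼ :=
    Nat.doubleFactorial_add_two (2 * k + 1)
  have hpos : (0 : ℝ) < (2 * k + 1)‼ := by exact_mod_cast Nat.doubleFactorial_pos _
  unfold arsinhCoeff
  rw [hdfac]
  push_cast [Nat.factorial_succ]
  field_simp
  ring

lemma abs_arsinhCoeff_le_one (k : ℕ) : |arsinhCoeff k| ≤ 1 := by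
  induction k with
  | zero => simp [arsinhCoeff]
  | succ k ih =>
    have h := congrArg abs (arsinhCoeff_succ k)
    rw [abs_mul, abs_mul, abs_neg, abs_of_pos (by positivity : (0 : ℝ) < 2 * k + 3),
      abs_of_pos (by positivity : (0 : ℝ) < 2 * k + 2)] at h
    nlinarith [abs_nonneg (arsinhCoeff k), abs_nonneg (arsinhCoeff (k + 1))]

lemma hasDerivAt_sum_mul_pow_odd (c : ℕ → ℝ) (n : ℕ) (y : ℝ) :
    HasDerivAt (fun t => ∑ k ∈ range n, c k * t ^ (2 * k + 1))
      (∑ k ∈ range n, (2 * k + 1) * c k * y ^ (2 * k)) y := by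
  refine HasDerivAt.fun_sum fun k _ => ?_
  refine ((hasDerivAt_pow (2 * k + 1) y).const_mul (c k)).congr_deriv ?_
  push_cast
  ring

lemma arsinhCoeff_sum_ode (n : ℕ) (y : ℝ) :
    y * ∑ k ∈ range (n + 1), arsinhCoeff k * y ^ (2 * k + 1)
      + (1 + y ^ 2) * ∑ k ∈ range (n + 1), (2 * k + 1) * arsinhCoeff k * y ^ (2 * k)
    = 1 + (2 * n + 2) * arsinhCoeff n * y ^ (2 * n + 2) := by
  induction n with
  | zero => simp [arsinhCoeff]; ring
  | succ n ih =>
    rw [sum_range_succ, sum_range_succ (fun k => (2 * (k : ℝ) + 1) * arsinhCoeff k * y ^ (2 * k))]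
    push_cast
    linear_combination ih + y ^ (2 * n + 2) * arsinhCoeff_succ n

lemma hasDerivAt_sqrt_one_add_sq_mul_sub_arsinh {f : ℝ → ℝ} {f' y : ℝ}
    (hf : HasDerivAt f f' y) :
    HasDerivAt (fun t => √(1 + t ^ 2) * f t - arsinh t)
      ((y * f y + (1 + y ^ 2) * f' - 1) / √(1 + y ^ 2)) y := by
  have hpos : 0 < 1 + y ^ 2 := by positivity
  have hsqrt : HasDerivAt (fun t => √(1 + t ^ 2)) (1 / (2 * √(1 + y ^ 2)) * (2 * y)) y :=
    (Real.hasDerivAt_sqrt hpos.ne').comp y (by simpa using (hasDerivAt_pow 2 y).const_add 1)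
  refine ((hsqrt.mul hf).sub (Real.hasDerivAt_arsinh y)).congr_deriv ?_
  have hsq : √(1 + y ^ 2) ^ 2 = 1 + y ^ 2 := sq_sqrt hpos.le
  have hne : √(1 + y ^ 2) ≠ 0 := (sqrt_pos.2 hpos).ne'
  field_simp
  rw [hsq]

lemma abs_sqrt_mul_sum_arsinhCoeff_sub_arsinh_le (n : ℕ) (x : ℝ) :
    |√(1 + x ^ 2) * ∑ k ∈ range (n + 1), arsinhCoeff k * x ^ (2 * k + 1) - arsinh x|
      ≤ (2 * n + 2) * |x| ^ (2 * n + 2) * |x| := by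
  set F := fun t =>
    √(1 + t ^ 2) * ∑ k ∈ range (n + 1), arsinhCoeff k * t ^ (2 * k + 1) - arsinh t
  have hF : ∀ y, HasDerivAt F ((2 * n + 2) * arsinhCoeff n * y ^ (2 * n + 2) / √(1 + y ^ 2)) y :=
    fun y => by
      convert hasDerivAt_sqrt_one_add_sq_mul_sub_arsinh
        (hasDerivAt_sum_mul_pow_odd arsinhCoeff (n + 1) y) using 2
      linear_combination (arsinhCoeff_sum_ode n y).symm
  have hF'_le : ∀ y ∈ Set.Icc (-|x|) |x|,
      ‖(2 * n + 2) * arsinhCoeff n * y ^ (2 * n + 2) / √(1 + y ^ 2)‖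
        ≤ (2 * n + 2) * |x| ^ (2 * n + 2) := by
    intro y hy
    have hyx : |y| ≤ |x| := abs_le.2 hy
    have hsqrt : 1 ≤ √(1 + y ^ 2) := one_le_sqrt.2 (by nlinarith)
    rw [norm_div, norm_mul, norm_mul, norm_pow, Real.norm_eq_abs, Real.norm_eq_abs,
      Real.norm_eq_abs, Real.norm_eq_abs, abs_of_pos (by positivity : (0 : ℝ) < 2 * n + 2),
      abs_of_pos (by positivity : 0 < √(1 + y ^ 2))]
    calc (2 * n + 2) * |arsinhCoeff n| * |y| ^ (2 * n + 2) / √(1 + y ^ 2)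
        ≤ (2 * n + 2) * |arsinhCoeff n| * |y| ^ (2 * n + 2) := div_le_self (by positivity) hsqrt
      _ ≤ (2 * n + 2) * 1 * |x| ^ (2 * n + 2) := by
        gcongr
        exact abs_arsinhCoeff_le_one n
      _ = (2 * n + 2) * |x| ^ (2 * n + 2) := by ring
  have hmvt := (convex_Icc _ _).norm_image_sub_le_of_norm_hasDerivWithin_le
    (fun y _ => (hF y).hasDerivWithinAt) hF'_le (x := 0)
    ⟨neg_nonpos.2 (abs_nonneg x), abs_nonneg x⟩ ⟨neg_abs_le x, le_abs_self x⟩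
  simpa [F] using hmvt

lemma hasSum_arsinhCoeff_mul_pow {x : ℝ} (hx : |x| < 1) :
    HasSum (fun k => arsinhCoeff k * x ^ (2 * k + 1)) (arsinh x / √(1 + x ^ 2)) := by
  have hx2 : x ^ 2 < 1 := by nlinarith [sq_abs x, abs_nonneg x]
  have hsummable : Summable fun k => ‖arsinhCoeff k * x ^ (2 * k + 1)‖ := by
    refine Summable.of_nonneg_of_le (fun k => norm_nonneg _) (fun k => ?_)
      ((summable_geometric_of_lt_one (sq_nonneg x) hx2).mul_left |x|)
    rw [norm_mul, norm_pow, Real.norm_eq_abs, Real.norm_eq_abs, pow_succ', pow_mul, sq_abs]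
    exact mul_le_of_le_one_left (by positivity) (abs_arsinhCoeff_le_one k)
  rw [hasSum_iff_tendsto_nat_of_summable_norm hsummable, ← tendsto_add_atTop_iff_nat 1]
  have hbound : Tendsto (fun n : ℕ => (2 * n + 2) * |x| ^ (2 * n + 2) * |x|) atTop (𝓝 0) := by
    have h := ((tendsto_add_atTop_iff_nat 1).2
      (tendsto_self_mul_const_pow_of_lt_one (sq_nonneg x) hx2)).const_mul (2 * |x|)
    rw [mul_zero] at h
    refine h.congr fun n => ?_
    rw [← sq_abs x, ← pow_mul]
    push_cast
    ring
  have hremainder := squeeze_zero_norm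
    (fun n => by rw [Real.norm_eq_abs]; exact abs_sqrt_mul_sum_arsinhCoeff_sub_arsinh_le n x)
    hbound
  have hsqrt : √(1 + x ^ 2) ≠ 0 := (sqrt_pos.2 (by positivity)).ne'
  convert (hremainder.add_const (arsinh x)).div_const √(1 + x ^ 2) using 2 with n
  · field_simp
    ring
  · simp

lemma arsinhCoeff_rescale {ε s : ℝ} (hs : s ≠ 0) (hε : s ^ 2 = 2 * ε) (z : ℝ) (k : ℕ) :
    ε⁻¹ * ((-1 : ℝ) ^ k * k ! * ε⁻¹ ^ k * z ^ (2 * k + 1) / (2 * k + 1)‼)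
      = 2 / s * (arsinhCoeff k * (z / s) ^ (2 * k + 1)) := by
  have hdfac : (0 : ℝ) < (2 * k + 1)‼ := by exact_mod_cast Nat.doubleFactorial_pos _
  obtain rfl : ε = s ^ 2 / 2 := by linarith
  unfold arsinhCoeff
  rw [inv_div, div_pow (2 : ℝ), div_pow z, ← pow_mul]
  field_simp
  ring

/-- For every real `ε > 0` and every real `z` with `|z| < √(2ε)`, the
series `ε⁻¹ ∑ₖ (-1)^k k! ε⁻ᵏ z^{2k+1}/(2k+1)!!` converges to
`2 arsinh(z/√(2ε)) / √(z² + 2ε)`. -/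
theorem stmt7 (ε : ℝ) (hε : 0 < ε) (z : ℝ) (hz : |z| < Real.sqrt (2 * ε)) :
    HasSum
      (fun k : ℕ =>
        ε⁻¹ * ((-1 : ℝ) ^ k * k.factorial * ε⁻¹ ^ k * z ^ (2 * k + 1) / ((2 * k + 1)‼ : ℝ)))
      (2 * Real.arsinh (z / Real.sqrt (2 * ε)) / Real.sqrt (z ^ 2 + 2 * ε)) := by
  set s := √(2 * ε)
  have hs : 0 < s := sqrt_pos.2 (by positivity)
  have hs2 : s ^ 2 = 2 * ε := sq_sqrt (by positivity)
  have hx : |z / s| < 1 := by rwa [abs_div, abs_of_pos hs, div_lt_one hs]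
  have hsqrt : √(1 + (z / s) ^ 2) = √(z ^ 2 + 2 * ε) / s := by
    rw [← sqrt_sq hs.le, ← sqrt_div' _ (sq_nonneg s), sqrt_sq hs.le, add_div, div_pow, hs2,
      div_self (by positivity), add_comm]
  have hvalue : 2 * arsinh (z / s) / √(z ^ 2 + 2 * ε)
      = 2 / s * (arsinh (z / s) / √(1 + (z / s) ^ 2)) := by
    have hpos : 0 < √(z ^ 2 + 2 * ε) := sqrt_pos.2 (by positivity)
    rw [hsqrt]
    field_simp
  rw [funext (arsinhCoeff_rescale hs.ne' hs2 z), hvalue]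
  exact (hasSum_arsinhCoeff_mul_pow hx).mul_left (2 / s)
end

section
/- For each fixed real $\epsilon > 0$, the function $z \mapsto \frac{\sqrt{z^2 + 2\epsilon}}{2\, \operatorname{arsinh}(z/\sqrt{2\epsilon})}$ admits the Laurent-type asymptotic expansion $\frac{\sqrt{z^2+2\epsilon}}{2\,\operatorname{arsinh}(z/\sqrt{2\epsilon})} = \frac{\epsilon}{z} + \frac{z}{3} - \frac{z^3}{45\,\epsilon} + \frac{z^5}{189\,\epsilon^2} - \frac{23\, z^7}{14175\,\epsilon^3} + O(z^9)$ as $z \to 0$ through nonzero real values. (This is the paper's expansion of $y^{-1}$ for the spectral curve of the class $\mathbb{J}$, showing that its Laurent coefficients in $z$ are not regular in $\epsilon$.) -/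
/-!
With `s = √(2ε)` and `u = z / s` the left-hand side is `s * (√(1 + u²) / (2 arsinh u) - q u / u)`
for the even octic `q = sqrtDivArsinhNumer`, and this difference equals `(u √(1 + u²) - 2 q(u) arsinh u) / (2 u arsinh u)`, whose denominator
has exact order `u²`. The numerator is `O(u¹¹)`: replace `arsinh` by its Taylor polynomial `T`
(error `O(u¹¹)`, by integrating `(1 + t²)^(-1/2) - T'(t) = O(t¹⁰)`, which holds because
`1 - T'(t)² (1 + t²)` is divisible by `t¹⁰`) and `√(1 + u²) = (1 + u²) / √(1 + u²)` by
`(1 + u²) T'(u)`; what remains, `u (1 + u²) T'(u) - 2 q(u) T(u)`, is divisible by `u¹¹`.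
-/

open Asymptotics Filter Topology

theorem isBigO_pow_succ_of_hasDerivAt {E : Type*} [NormedAddCommGroup E] [NormedSpace ℝ E]
    {f f' : ℝ → E} {n : ℕ} (hf : ∀ᶠ x in 𝓝 0, HasDerivAt f (f' x) x) (hf0 : f 0 = 0)
    (hf' : f' =O[𝓝 0] fun x => x ^ n) : f =O[𝓝 0] fun x => x ^ (n + 1) := by
  obtain ⟨C, hC, hfC⟩ := hf'.exists_nonneg
  obtain ⟨δ, hδ, hball⟩ := Metric.eventually_nhds_iff_ball.1 (hf.and hfC.bound)
  refine IsBigO.of_bound C (Metric.eventually_nhds_iff_ball.2 ⟨δ, hδ, fun x hx => ?_⟩)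
  set K := Metric.closedBall (0 : ℝ) ‖x‖
  have hsub : K ⊆ Metric.ball 0 δ := Metric.closedBall_subset_ball (by simpa using hx)
  have hbound : ∀ y ∈ K, ‖f' y‖ ≤ C * ‖x‖ ^ n := fun y hy => by
    refine (hball y (hsub hy)).2.trans ?_
    rw [norm_pow]
    gcongr
    simpa [K] using hy
  have key := (convex_closedBall (0 : ℝ) ‖x‖).norm_image_sub_le_of_norm_hasDerivWithin_le
    (fun y hy => (hball y (hsub hy)).1.hasDerivWithinAt) hbound
    (Metric.mem_closedBall_self (norm_nonneg x)) (show x ∈ K by simp [K])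
  simpa [hf0, norm_pow, pow_succ, mul_assoc] using key

theorem isBigO_mul_of_tendsto {α : Type*} {l : Filter α} {f r : α → ℝ} {c : ℝ}
    (hr : Tendsto r l (𝓝 c)) : (fun x => f x * r x) =O[l] f := by
  simpa using (isBigO_refl f l).mul (hr.isBigO_one ℝ)

noncomputable def arsinhTaylor (u : ℝ) : ℝ :=
  u - u ^ 3 / 6 + 3 * u ^ 5 / 40 - 5 * u ^ 7 / 112 + 35 * u ^ 9 / 1152

noncomputable def invSqrtOneAddSqTaylor (t : ℝ) : ℝ :=
  1 - t ^ 2 / 2 + 3 * t ^ 4 / 8 - 5 * t ^ 6 / 16 + 35 * t ^ 8 / 128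

theorem hasDerivAt_arsinhTaylor (u : ℝ) :
    HasDerivAt arsinhTaylor (invSqrtOneAddSqTaylor u) u := by
  have h : HasDerivAt arsinhTaylor _ u :=
    ((((hasDerivAt_id u).sub ((hasDerivAt_pow 3 u).div_const 6)).add
      (((hasDerivAt_pow 5 u).const_mul 3).div_const 40)).sub
      (((hasDerivAt_pow 7 u).const_mul 5).div_const 112)).add
      (((hasDerivAt_pow 9 u).const_mul 35).div_const 1152)
  convert h using 1
  norm_num [invSqrtOneAddSqTaylor]
  ring

theorem inv_sqrt_one_add_sq_sub_taylor_isBigO :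
    (fun t => (√(1 + t ^ 2))⁻¹ - invSqrtOneAddSqTaylor t) =O[𝓝 0] fun t => t ^ 10 := by
  set p := invSqrtOneAddSqTaylor
  set D : ℝ → ℝ := fun t => √(1 + t ^ 2) * (1 + p t * √(1 + t ^ 2))
  set r : ℝ → ℝ := fun t => -63 / 128 + 105 / 512 * t ^ 2 - 135 / 1024 * t ^ 4 +
    1575 / 16384 * t ^ 6 - 1225 / 16384 * t ^ 8
  have hD : Continuous D := by simp only [D, p, invSqrtOneAddSqTaylor]; fun_prop
  have hD0 : D 0 ≠ 0 := by norm_num [D, p, invSqrtOneAddSqTaylor]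
  have hrem : ∀ t, 1 - p t ^ 2 * (1 + t ^ 2) = t ^ 10 * r t := fun t => by
    simp only [p, r, invSqrtOneAddSqTaylor]; ring
  have hrD : Tendsto (fun t => r t / D t) (𝓝 0) (𝓝 (r 0 / D 0)) :=
    (Continuous.tendsto (by fun_prop) 0).div (hD.tendsto 0) hD0
  refine (isBigO_mul_of_tendsto hrD).congr' ?_ EventuallyEq.rfl
  filter_upwards [hD.continuousAt.eventually_ne hD0] with t ht
  rw [← mul_div_assoc, ← hrem, div_eq_iff ht]
  simp only [D]
  field_simp
  linear_combination p t ^ 2 * Real.sq_sqrt (by positivity : (0 : ℝ) ≤ 1 + t ^ 2)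

theorem arsinh_sub_taylor_isBigO :
    (fun u => Real.arsinh u - arsinhTaylor u) =O[𝓝 0] fun u => u ^ 11 :=
  isBigO_pow_succ_of_hasDerivAt
    (Eventually.of_forall fun u => (Real.hasDerivAt_arsinh u).sub (hasDerivAt_arsinhTaylor u))
    (by simp [arsinhTaylor]) inv_sqrt_one_add_sq_sub_taylor_isBigO

/-- `sqrtDivArsinhNumer u / u` is the Laurent polynomial of `√(1 + u²) / (2 arsinh u)` at `0`. -/
noncomputable def sqrtDivArsinhNumer (u : ℝ) : ℝ :=
  1 / 2 + u ^ 2 / 3 - 2 * u ^ 4 / 45 + 4 * u ^ 6 / 189 - 184 * u ^ 8 / 14175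

theorem mul_sqrt_sub_arsinh_isBigO :
    (fun u => u * √(1 + u ^ 2) - 2 * sqrtDivArsinhNumer u * Real.arsinh u) =O[𝓝 0]
      fun u => u ^ 11 := by
  have hq : Continuous fun u => sqrtDivArsinhNumer u := by
    simp only [sqrtDivArsinhNumer]; fun_prop
  set q := sqrtDivArsinhNumer
  set p := invSqrtOneAddSqTaylor
  set T := arsinhTaylor
  set r : ℝ → ℝ := fun u => 1315693 / 5443200 + 103787 / 15876000 * u ^ 2 -
    2329 / 952560 * u ^ 4 + 23 / 29160 * u ^ 6
  have hpoly : ∀ u, u * (1 + u ^ 2) * p u - 2 * q u * T u = u ^ 11 * r u := fun u => by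
    simp only [p, q, T, r, invSqrtOneAddSqTaylor, sqrtDivArsinhNumer, arsinhTaylor]; ring
  have hsqrt : ∀ u : ℝ, (√(1 + u ^ 2))⁻¹ * (1 + u ^ 2) = √(1 + u ^ 2) := fun u => by
    rw [inv_mul_eq_div, Real.div_sqrt]
  have hsqrtTerm : (fun u => ((√(1 + u ^ 2))⁻¹ - p u) * u * (1 + u ^ 2)) =O[𝓝 0]
      fun u => u ^ 11 := by
    have h := inv_sqrt_one_add_sq_sub_taylor_isBigO.mul (isBigO_refl (fun u : ℝ => u) _)
    refine (isBigO_mul_of_tendsto (r := fun u : ℝ => 1 + u ^ 2)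
      (Continuous.tendsto (by fun_prop) 0)).trans (h.congr_right fun u => by ring)
  have hpolyTerm : (fun u => u ^ 11 * r u) =O[𝓝 0] fun u => u ^ 11 :=
    isBigO_mul_of_tendsto (Continuous.tendsto (by fun_prop) 0)
  have harsinhTerm : (fun u => (Real.arsinh u - T u) * (2 * q u)) =O[𝓝 0] fun u => u ^ 11 :=
    (isBigO_mul_of_tendsto ((hq.const_mul 2).tendsto 0)).trans arsinh_sub_taylor_isBigO
  refine ((hsqrtTerm.add hpolyTerm).sub harsinhTerm).congr_left fun u => ?_
  linear_combination u * hsqrt u - hpoly u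

theorem tendsto_div_arsinh : Tendsto (fun u => u / Real.arsinh u) (𝓝[≠] 0) (𝓝 1) := by
  have h := (hasDerivAt_iff_tendsto_slope.1 (Real.hasDerivAt_arsinh 0)).inv₀ (by simp)
  simpa [slope_def_field] using h

theorem sqrt_div_arsinh_sub_isBigO :
    (fun u => √(1 + u ^ 2) / (2 * Real.arsinh u) - sqrtDivArsinhNumer u / u) =O[𝓝[≠] 0]
      fun u => u ^ 9 := by
  have h := (((mul_sqrt_sub_arsinh_isBigO.mono nhdsWithin_le_nhds).const_mul_left (1 / 2)).mul
    (tendsto_div_arsinh.isBigO_one ℝ)).mul (isBigO_refl (fun u : ℝ => (u ^ 2)⁻¹) _)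
  refine h.congr' ?_ ?_
  all_goals filter_upwards [self_mem_nhdsWithin] with u (hu : u ≠ 0)
  · have hA : Real.arsinh u ≠ 0 := by simpa using hu
    field_simp
  · field_simp

/-- For each fixed real `ε > 0`, as `z → 0` through nonzero real
values,
`√(z²+2ε)/(2 arsinh(z/√(2ε))) = ε/z + z/3 - z³/(45ε) + z⁵/(189ε²) - 23z⁷/(14175ε³) + O(z⁹)`. -/
theorem stmt11 (ε : ℝ) (hε : 0 < ε) :
    (fun z : ℝ =>
        Real.sqrt (z ^ 2 + 2 * ε) / (2 * Real.arsinh (z / Real.sqrt (2 * ε))) -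
          (ε / z + z / 3 - z ^ 3 / (45 * ε) + z ^ 5 / (189 * ε ^ 2) -
            23 * z ^ 7 / (14175 * ε ^ 3))) =O[𝓝[≠] (0 : ℝ)]
      fun z : ℝ => z ^ 9 := by
  set s := √(2 * ε)
  have hs : 0 < s := by positivity
  have hs2 : s ^ 2 = 2 * ε := Real.sq_sqrt (by positivity)
  have hscale : Tendsto (fun z => z / s) (𝓝[≠] 0) (𝓝[≠] 0) :=
    tendsto_nhdsWithin_of_tendsto_nhds_of_eventually_within _
      (((continuous_id.div_const s).tendsto' 0 0 (zero_div s)).mono_left nhdsWithin_le_nhds)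
      (eventually_mem_nhdsWithin.mono fun z hz => div_ne_zero hz hs.ne')
  have hpow : (fun z => (z / s) ^ 9) =O[𝓝[≠] 0] fun z => z ^ 9 :=
    (isBigO_const_mul_self (s ^ 9)⁻¹ (fun z : ℝ => z ^ 9) _).congr_left fun z => by ring
  have h := ((sqrt_div_arsinh_sub_isBigO.comp_tendsto hscale).const_mul_left s).trans hpow
  refine h.congr' ?_ EventuallyEq.rfl
  filter_upwards [self_mem_nhdsWithin] with z (hz : z ≠ 0)
  have hsqrt : √(z ^ 2 + 2 * ε) = s * √(1 + (z / s) ^ 2) := by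
    have h : z ^ 2 + 2 * ε = s ^ 2 * (1 + (z / s) ^ 2) := by
      field_simp
      linear_combination -hs2
    rw [h, Real.sqrt_mul (sq_nonneg s), Real.sqrt_sq hs.le]
  have hε' : ε = s ^ 2 / 2 := by rw [hs2]; ring
  simp only [Function.comp_apply, hsqrt, sqrtDivArsinhNumer]
  rw [hε']
  field_simp
  ring
end
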